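/- arXiv:0807.2871 — 2 statements merged into one kernel-verified Lean document; each statement's English description precedes it below -/
import Mathlib

section
/- Let G be a group of homeomorphisms of the circle stabilizing a finite nonempty subset X ⊆ S¹ setwise, with all elements orientation-preserving. Then: (1) if g ∈ G fixes some point of X, then g fixes every point of X; (2) the restriction of G to X is a cyclic group of order k, where k divides |X|; (3) the set G₀ of elements of G with rotation number 0 is a normal subgroup with G/G₀ cyclic of order k. -/
/-- The circle `S¹ = ℝ/ℤ`. -/
abbrev S1 := AddCircle (1 : ℝ)

/-- `F : ℝ → ℝ` is a lift of `f` through the covering `ℝ → ℝ/ℤ`, witnessing that `f`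
is an orientation-preserving homeomorphism of the circle. -/
def IsLiftOf (f : Equiv.Perm S1) (F : ℝ → ℝ) : Prop :=
  StrictMono F ∧ Continuous F ∧ (∀ x : ℝ, F (x + 1) = F x + 1) ∧
    ∀ x : ℝ, f ((x : ℝ) : S1) = ((F x : ℝ) : S1)

/-- `f` is an orientation-preserving homeomorphism of the circle. -/
def IsPosHomeo (f : Equiv.Perm S1) : Prop := ∃ F, IsLiftOf f F

/-- `ρ` is the translation number of the lift `F`. -/
def HasRotLim (F : ℝ → ℝ) (ρ : ℝ) : Prop :=
  Filter.Tendsto (fun n : ℕ => F^[n] 0 / n) Filter.atTop (nhds ρ)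

/-- `G` contains a non-abelian free subgroup (one isomorphic to the free group of rank 2). -/
def HasFreeSubgroup (G : Subgroup (Equiv.Perm S1)) : Prop :=
  ∃ φ : FreeGroup (Fin 2) →* Equiv.Perm S1, Function.Injective φ ∧ ∀ w, φ w ∈ G

/-- The rotation number of g is 0. -/
def RotZero (g : Equiv.Perm S1) : Prop :=
  ∃ F ρ, IsLiftOf g F ∧ HasRotLim F ρ ∧ ∃ m : ℤ, ρ = m

/-!
Lift `X` to the `ℤ`-periodic discrete set `π⁻¹ X ⊆ ℝ` and enumerate it increasingly as
`(y j)`, so that `y (j + n) = y j + 1` with `n = |X|`. A lift `F` of `g ∈ G` restricts to an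
increasing bijection of this set, hence is a shift `y j ↦ y (j + d)`; thus `g` rotates `X` by
`d mod n`, which gives a homomorphism `ψ : G → ℤ/n` whose kernel is the pointwise stabiliser of
any single point of `X`. Since `Fⁿ (y 0) = y 0 + d`, the rotation number of `g` is `d / n`, so
`g` has rotation number `0` exactly when `ψ g = 0`. The image of `ψ` is cyclic of some order
`k ∣ n`, and all three statements follow.
-/

open Function Set

lemma Int.eq_add_of_strictMono_of_surjective {s : ℤ → ℤ} (hs : StrictMono s)
    (hsurj : Surjective s) (j : ℤ) : s j = j + s 0 := by
  have hsucc : ∀ i, s (i + 1) = s i + 1 := fun i => by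
    obtain ⟨m, hm⟩ := hsurj (s i + 1)
    have him : i < m := hs.lt_iff_lt.1 (by omega)
    have := hs.monotone (show i + 1 ≤ m by omega)
    have := hs (lt_add_one i)
    omega
  induction j using Int.induction_on with
  | zero => simp
  | succ i ih => rw [hsucc]; omega
  | pred i ih => have := hsucc (-(i : ℤ) - 1); simp only [sub_add_cancel] at this; omega

lemma Finset.mem_of_perm_apply_mem {α : Type*} {g : Equiv.Perm α} {s : Finset α}
    (hs : ∀ x ∈ s, g x ∈ s) {z : α} (hz : g z ∈ s) : z ∈ s := by
  have hmap : s.map g.toEmbedding = s :=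
    Finset.map_eq_of_subset fun _ hx => by
      obtain ⟨x, hxs, rfl⟩ := Finset.mem_map.1 hx
      exact hs x hxs
  rw [← hmap, Finset.mem_map_equiv] at hz
  simpa using hz

lemma MonoidHom.exists_surjective_zmod_ker_eq {G M : Type*} [Group G] [Group M] [IsCyclic M]
    (ψ : G →* M) : ∃ k, k ∣ Nat.card M ∧ ∃ φ : G →* Multiplicative (ZMod k),
      Surjective φ ∧ φ.ker = ψ.ker := by
  let e := (zmodCyclicMulEquiv (inferInstance : IsCyclic ψ.range)).symm
  refine ⟨Nat.card ψ.range, Subgroup.card_subgroup_dvd_card _,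
    e.toMonoidHom.comp ψ.rangeRestrict, ?_, ?_⟩
  · exact e.surjective.comp ψ.rangeRestrict_surjective
  · ext g
    simp [MonoidHom.mem_ker]

lemma S1.coe_eq_coe_iff {x y : ℝ} :
    (x : S1) = y ↔ ∃ m : ℤ, y = x + m := by
  rw [QuotientAddGroup.eq, AddSubgroup.mem_zmultiples_iff]
  simp only [zsmul_eq_mul, mul_one]
  exact ⟨fun ⟨m, hm⟩ => ⟨m, by linarith⟩, fun ⟨m, hm⟩ => ⟨m, by linarith⟩⟩

namespace IsLiftOf

variable {f : Equiv.Perm S1} {F : ℝ → ℝ}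

lemma apply_coe (h : IsLiftOf f F) (x : ℝ) : f x = F x := h.2.2.2 x

def toCircleDeg1Lift (h : IsLiftOf f F) : CircleDeg1Lift := ⟨⟨F, h.1.monotone⟩, h.2.2.1⟩

@[simp]
lemma coe_toCircleDeg1Lift (h : IsLiftOf f F) : ⇑h.toCircleDeg1Lift = F := rfl

lemma surjective (h : IsLiftOf f F) : Surjective F :=
  h.toCircleDeg1Lift.continuous_iff_surjective.1 h.2.1

lemma hasRotLim_iff (h : IsLiftOf f F) {ρ : ℝ} :
    HasRotLim F ρ ↔ h.toCircleDeg1Lift.translationNumber = ρ := by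
  unfold HasRotLim
  refine ⟨fun hρ => CircleDeg1Lift.translationNumber_eq_of_tendsto₀ _ hρ, ?_⟩
  rintro rfl
  simpa only [CircleDeg1Lift.coe_pow, coe_toCircleDeg1Lift] using
    h.toCircleDeg1Lift.tendsto_translation_number₀

end IsLiftOf

def periodicExtension (n : ℕ) [NeZero n] (e : Fin n → ℝ) (j : ℤ) : ℝ :=
  e (Int.divModEquiv n j).2 + (Int.divModEquiv n j).1

section periodicExtension

variable {n : ℕ} [NeZero n] (e : Fin n → ℝ)

lemma periodicExtension_mul_add (q : ℤ) (i : Fin n) :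
    periodicExtension n e (q * n + i) = e i + q := by
  have := (Int.divModEquiv n).apply_symm_apply (q, i)
  rw [Int.divModEquiv_symm_apply] at this
  simp only [periodicExtension, this]

lemma periodicExtension_add_mul (j t : ℤ) :
    periodicExtension n e (j + t * n) = periodicExtension n e j + t := by
  obtain ⟨⟨q, i⟩, rfl⟩ := (Int.divModEquiv n).symm.surjective j
  rw [Int.divModEquiv_symm_apply, show q * n + i + t * n = (q + t) * n + i by ring,
    periodicExtension_mul_add, periodicExtension_mul_add]
  push_cast
  ring

lemma strictMono_periodicExtension {e : Fin n → ℝ} (he : StrictMono e)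
    (he1 : ∀ i j, e i < e j + 1) : StrictMono (periodicExtension n e) := by
  refine strictMono_int_of_lt_succ fun j => ?_
  obtain ⟨⟨q, i⟩, rfl⟩ := (Int.divModEquiv n).symm.surjective j
  rw [Int.divModEquiv_symm_apply, periodicExtension_mul_add]
  by_cases hi : (i : ℕ) + 1 < n
  · rw [show q * n + (i : ℕ) + 1 = q * n + ((⟨i + 1, hi⟩ : Fin n) : ℕ) by push_cast; ring,
      periodicExtension_mul_add]
    linarith [he (show i < ⟨i + 1, hi⟩ from Fin.lt_def.2 (Nat.lt_succ_self _))]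
  · have hlast : (i : ℤ) + 1 = n := by omega
    rw [show q * n + (i : ℕ) + 1 = (q + 1) * n + ((0 : Fin n) : ℕ) by
      rw [Fin.val_zero]; push_cast; linear_combination hlast, periodicExtension_mul_add]
    push_cast
    linarith [he1 i 0]

end periodicExtension

structure CyclicEnumeration (X : Finset S1) where
  seq : ℤ → ℝ
  strictMono : StrictMono seq
  add_mul_card : ∀ j t : ℤ, seq (j + t * X.card) = seq j + t
  coe_mem_iff : ∀ r : ℝ, (r : S1) ∈ X ↔ r ∈ range seq

namespace CyclicEnumeration

variable {X : Finset S1}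

lemma nonempty (hX : X.Nonempty) : Nonempty (CyclicEnumeration X) := by
  have : NeZero X.card := ⟨hX.card_pos.ne'⟩
  let rep : S1 → ℝ := fun x => AddCircle.equivIco 1 0 x
  have hrep : ∀ x, (rep x : S1) = x := fun x => AddCircle.coe_equivIco
  have hrepIco : ∀ x, rep x ∈ Ico 0 1 := fun x => by
    simpa only [zero_add] using (AddCircle.equivIco 1 0 x).2
  have hcard : (X.image rep).card = X.card :=
    Finset.card_image_of_injective _ fun x y hxy => by rw [← hrep x, ← hrep y, hxy]
  let e := (X.image rep).orderEmbOfFin hcard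
  have he : ∀ i, ∃ x ∈ X, rep x = e i := fun i =>
    Finset.mem_image.1 (Finset.orderEmbOfFin_mem _ _ i)
  refine ⟨⟨periodicExtension _ e, strictMono_periodicExtension e.strictMono fun i j => ?_,
    periodicExtension_add_mul e, fun r => ⟨fun hr => ?_, ?_⟩⟩⟩
  · obtain ⟨x, -, hx⟩ := he i
    obtain ⟨y, -, hy⟩ := he j
    linarith [hx ▸ (hrepIco x).2, hy ▸ (hrepIco y).1]
  · have : rep r ∈ range e := by
      rw [Finset.range_orderEmbOfFin]
      exact Finset.mem_image_of_mem rep hr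
    obtain ⟨i, hi⟩ := this
    obtain ⟨m, hm⟩ := S1.coe_eq_coe_iff.1 (hrep r)
    exact ⟨m * X.card + i, by rw [periodicExtension_mul_add, hi, ← hm]⟩
  · rintro ⟨j, rfl⟩
    obtain ⟨⟨q, i⟩, rfl⟩ := (Int.divModEquiv X.card).symm.surjective j
    obtain ⟨x, hx, hxi⟩ := he i
    rw [Int.divModEquiv_symm_apply, periodicExtension_mul_add, ← hxi,
      ← S1.coe_eq_coe_iff.2 ⟨q, rfl⟩, hrep]
    exact hx

lemma card_pos (E : CyclicEnumeration X) : 0 < X.card := by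
  by_contra h
  have := E.add_mul_card 0 1
  simp_all

variable (E : CyclicEnumeration X)

lemma coe_seq_mem (j : ℤ) : (E.seq j : S1) ∈ X := (E.coe_mem_iff _).2 ⟨j, rfl⟩

lemma exists_coe_seq_eq {x : S1} (hx : x ∈ X) : ∃ j, (E.seq j : S1) = x := by
  obtain ⟨r, rfl⟩ := QuotientAddGroup.mk_surjective x
  obtain ⟨j, rfl⟩ := (E.coe_mem_iff r).1 hx
  exact ⟨j, rfl⟩

lemma coe_seq_eq_coe_seq_iff {i j : ℤ} :
    (E.seq i : S1) = E.seq j ↔ (i : ZMod X.card) = j := by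
  rw [S1.coe_eq_coe_iff, ZMod.intCast_eq_intCast_iff_dvd_sub]
  constructor
  · rintro ⟨m, hm⟩
    rw [← E.add_mul_card] at hm
    exact ⟨m, by linarith [E.strictMono.injective hm]⟩
  · rintro ⟨m, hm⟩
    exact ⟨m, by rw [← E.add_mul_card]; congr 1; linarith⟩

def Rotates (g : Equiv.Perm S1) (d : ℤ) : Prop := ∀ j, g (E.seq j) = E.seq (j + d)

variable {E}

lemma Rotates.mul {g h : Equiv.Perm S1} {d e : ℤ} (hg : E.Rotates g d) (hh : E.Rotates h e) :
    E.Rotates (g * h) (e + d) := fun j => by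
  rw [Equiv.Perm.mul_apply, hh, hg, add_assoc]

lemma Rotates.apply_eq_apply_iff {g h : Equiv.Perm S1} {d e : ℤ} (hg : E.Rotates g d)
    (hh : E.Rotates h e) {x : S1} (hx : x ∈ X) : g x = h x ↔ (d : ZMod X.card) = e := by
  obtain ⟨j, rfl⟩ := E.exists_coe_seq_eq hx
  rw [hg, hh, coe_seq_eq_coe_seq_iff]
  push_cast
  exact add_right_inj _

lemma Rotates.intCast_eq {g : Equiv.Perm S1} {d e : ℤ} (hd : E.Rotates g d)
    (he : E.Rotates g e) : (d : ZMod X.card) = e :=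
  (hd.apply_eq_apply_iff he (E.coe_seq_mem 0)).1 rfl

variable (E)

lemma exists_shift {g : Equiv.Perm S1} {F : ℝ → ℝ} (hF : IsLiftOf g F)
    (hX : ∀ x ∈ X, g x ∈ X) : ∃ d : ℤ, ∀ j, F (E.seq j) = E.seq (j + d) := by
  have hmaps : ∀ j, ∃ i, E.seq i = F (E.seq j) := fun j =>
    (E.coe_mem_iff _).1 (by rw [← hF.apply_coe]; exact hX _ (E.coe_seq_mem j))
  choose s hs using hmaps
  have hmono : StrictMono s := fun a b hab =>
    E.strictMono.lt_iff_lt.1 (by rw [hs, hs]; exact hF.1 (E.strictMono hab))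
  have hsurj : Surjective s := by
    intro i
    obtain ⟨r, hr⟩ := hF.surjective (E.seq i)
    have : (r : S1) ∈ X :=
      Finset.mem_of_perm_apply_mem hX (by rw [hF.apply_coe, hr]; exact E.coe_seq_mem i)
    obtain ⟨j, rfl⟩ := (E.coe_mem_iff r).1 this
    exact ⟨j, E.strictMono.injective (by rw [hs, hr])⟩
  exact ⟨s 0, fun j => by rw [← hs, Int.eq_add_of_strictMono_of_surjective hmono hsurj j]⟩

variable {E}

lemma rotates_of_shift {g : Equiv.Perm S1} {F : ℝ → ℝ} (hF : IsLiftOf g F) {d : ℤ}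
    (hd : ∀ j, F (E.seq j) = E.seq (j + d)) : E.Rotates g d := fun j => by
  rw [hF.apply_coe, hd]

lemma translationNumber_eq {g : Equiv.Perm S1} {F : ℝ → ℝ} (hF : IsLiftOf g F) {d : ℤ}
    (hd : ∀ j, F (E.seq j) = E.seq (j + d)) :
    hF.toCircleDeg1Lift.translationNumber = d / X.card := by
  have hiter : ∀ m : ℕ, F^[m] (E.seq 0) = E.seq (m * d) := fun m => by
    induction m with
    | zero => simp
    | succ m ih => rw [Function.iterate_succ_apply', ih, hd]; push_cast; ring_nf
  refine CircleDeg1Lift.translationNumber_of_map_pow_eq_add_int _ (x := E.seq 0) ?_ E.card_pos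
  rw [CircleDeg1Lift.coe_pow, IsLiftOf.coe_toCircleDeg1Lift, hiter, mul_comm, ← zero_add (d * _),
    E.add_mul_card]

variable (E)

lemma exists_rotates {g : Equiv.Perm S1} (hg : IsPosHomeo g) (hX : ∀ x ∈ X, g x ∈ X) :
    ∃ d, E.Rotates g d := by
  obtain ⟨F, hF⟩ := hg
  obtain ⟨d, hd⟩ := E.exists_shift hF hX
  exact ⟨d, rotates_of_shift hF hd⟩

variable (G : Subgroup (Equiv.Perm S1)) (hpos : ∀ g ∈ G, IsPosHomeo g)
  (hinv : ∀ g ∈ G, ∀ x ∈ X, g x ∈ X)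

noncomputable def rotationHom : G →* Multiplicative (ZMod X.card) :=
  MonoidHom.mk' (fun g => .ofAdd (E.exists_rotates (hpos g g.2) (hinv g g.2)).choose)
    fun g h => by
      have hrot (k : G) := (E.exists_rotates (hpos k k.2) (hinv k k.2)).choose_spec
      rw [← ofAdd_add, add_comm, ← Int.cast_add]
      exact congrArg _ ((hrot (g * h)).intCast_eq ((hrot g).mul (hrot h)))

variable {E G hpos hinv}

lemma rotationHom_eq {g : G} {d : ℤ} (hd : E.Rotates g d) :
    E.rotationHom G hpos hinv g = .ofAdd (d : ZMod X.card) :=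
  congrArg Multiplicative.ofAdd
    ((E.exists_rotates (hpos g g.2) (hinv g g.2)).choose_spec.intCast_eq hd)

variable (E hpos hinv)

lemma apply_eq_apply_iff (g h : G) {x : S1} (hx : x ∈ X) :
    (g : Equiv.Perm S1) x = (h : Equiv.Perm S1) x ↔
      E.rotationHom G hpos hinv g = E.rotationHom G hpos hinv h := by
  obtain ⟨d, hd⟩ := E.exists_rotates (hpos g g.2) (hinv g g.2)
  obtain ⟨e, he⟩ := E.exists_rotates (hpos h h.2) (hinv h h.2)
  rw [rotationHom_eq hd, rotationHom_eq he, hd.apply_eq_apply_iff he hx,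
    Multiplicative.ofAdd.injective.eq_iff]

lemma forall_apply_eq_apply_iff (g h : G) :
    (∀ x ∈ X, (g : Equiv.Perm S1) x = (h : Equiv.Perm S1) x) ↔
      E.rotationHom G hpos hinv g = E.rotationHom G hpos hinv h :=
  ⟨fun hgh => (E.apply_eq_apply_iff hpos hinv g h (E.coe_seq_mem 0)).1 (hgh _ (E.coe_seq_mem 0)),
    fun hψ _ hx => (E.apply_eq_apply_iff hpos hinv g h hx).2 hψ⟩

lemma rotZero_iff (g : G) : RotZero g ↔ E.rotationHom G hpos hinv g = 1 := by
  have hn : (X.card : ℝ) ≠ 0 := by exact_mod_cast E.card_pos.ne'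
  constructor
  · rintro ⟨F, ρ, hF, hlim, m, rfl⟩
    obtain ⟨d, hd⟩ := E.exists_shift hF (hinv g g.2)
    have hτ := translationNumber_eq hF hd
    rw [hF.hasRotLim_iff.1 hlim, eq_div_iff hn] at hτ
    have hdm : d = m * X.card := by exact_mod_cast hτ.symm
    rw [rotationHom_eq (rotates_of_shift hF hd), hdm]
    simp
  · intro h1
    obtain ⟨F, hF⟩ := hpos g g.2
    obtain ⟨d, hd⟩ := E.exists_shift hF (hinv g g.2)
    rw [rotationHom_eq (rotates_of_shift hF hd), ← ofAdd_zero,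
      Multiplicative.ofAdd.injective.eq_iff, ZMod.intCast_zmod_eq_zero_iff_dvd] at h1
    obtain ⟨m, rfl⟩ := h1
    refine ⟨F, m, hF, hF.hasRotLim_iff.2 ?_, m, rfl⟩
    rw [translationNumber_eq hF hd]
    push_cast
    field_simp

end CyclicEnumeration

/-- For a group G of orientation-preserving circle homeomorphisms stabilizing a finite
nonempty set X: (1) an element fixing a point of X fixes X pointwise; (2) the
restriction of G to X is cyclic of order k with k dividing |X|; (3) the elements of
rotation number 0 form a normal subgroup G₀ with G/G₀ cyclic of order k. -/
theorem stmt11 (G : Subgroup (Equiv.Perm S1)) (hpos : ∀ g ∈ G, IsPosHomeo g)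
    (X : Finset S1) (hXne : X.Nonempty)
    (hinv : ∀ g ∈ G, ∀ x ∈ X, g x ∈ X) :
    (∀ g ∈ G, (∃ x ∈ X, g x = x) → ∀ x ∈ X, g x = x) ∧
    ∃ k : ℕ, 0 < k ∧ k ∣ X.card ∧
      (∃ σ ∈ G, (∀ x ∈ X, (σ ^ k) x = x) ∧
        (∀ m : ℕ, 0 < m → m < k → ∃ x ∈ X, (σ ^ m) x ≠ x) ∧
        ∀ g ∈ G, ∃ m : ℕ, ∀ x ∈ X, g x = (σ ^ m) x) ∧
      ∃ H : Subgroup G,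
        ((H : Set G) = {g : G | RotZero (g : Equiv.Perm S1)}) ∧ H.Normal ∧
        ∃ φ : G →* Multiplicative (ZMod k),
          Function.Surjective φ ∧ MonoidHom.ker φ = H := by
  obtain ⟨E⟩ := CyclicEnumeration.nonempty hXne
  set ψ := E.rotationHom G hpos hinv
  obtain ⟨k, hkn, φ, hφ, hker⟩ := ψ.exists_surjective_zmod_ker_eq
  rw [Nat.card_congr Multiplicative.toAdd, Nat.card_zmod] at hkn
  have hk : 0 < k := Nat.pos_of_dvd_of_pos hkn hXne.card_pos
  have : NeZero k := ⟨hk.ne'⟩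
  have hagree (g h : G) :
      (∀ x ∈ X, (g : Equiv.Perm S1) x = (h : Equiv.Perm S1) x) ↔ φ g = φ h := by
    rw [E.forall_apply_eq_apply_iff hpos hinv, φ.eq_iff, ψ.eq_iff, hker]
  obtain ⟨σ, hσ⟩ := hφ (.ofAdd 1)
  have hφσ (m : ℕ) : φ (σ ^ m) = .ofAdd (m : ZMod k) := by
    rw [map_pow, hσ, ← ofAdd_nsmul, nsmul_one]
  refine ⟨fun g hg ⟨x, hx, hgx⟩ => ?_, k, hk, hkn,
    ⟨σ, σ.2, ?_, ?_, ?_⟩, φ.ker, ?_, φ.normal_ker, φ, hφ, rfl⟩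
  · simpa using (E.forall_apply_eq_apply_iff hpos hinv ⟨g, hg⟩ 1).2
      ((E.apply_eq_apply_iff hpos hinv ⟨g, hg⟩ 1 hx).1 hgx)
  · simpa using (hagree (σ ^ k) 1).2 (by simp [hφσ])
  · intro m hm hmk
    by_contra! h
    have := (hagree (σ ^ m) 1).1 (by simpa using h)
    rw [hφσ, map_one, ← ofAdd_zero, Multiplicative.ofAdd.injective.eq_iff,
      ZMod.natCast_eq_zero_iff] at this
    exact Nat.not_dvd_of_pos_of_lt hm hmk this
  · intro g hg
    refine ⟨(φ ⟨g, hg⟩).toAdd.val, ?_⟩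
    have := (hagree ⟨g, hg⟩ (σ ^ (φ ⟨g, hg⟩).toAdd.val)).2 (by
      rw [hφσ, ZMod.natCast_zmod_val, ofAdd_toAdd])
    simpa using this
  · ext g
    rw [SetLike.mem_coe, hker, MonoidHom.mem_ker, ← E.rotZero_iff]
    rfl
end

section
/- Let z be an element of PL₊([η,ζ]) whose graph lies strictly below the diagonal on the interior (z(t) < t for all t in the open interval), and let g ∈ PL₊([η,ζ]) satisfy g⁻¹ z g = z and g'(η⁺) = 1 (the right derivative of g at η equals 1). Then g is the identity on [η,ζ]. -/
/-!
Slope 1 at the fixed point `η` makes `g` the identity on its first linear piece `[η, δ]`.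
Since `z` lies below the diagonal and is right continuous, every orbit `z^[n] t` decreases to a
fixed point of `z`, which can only be `η`; so some `z^[n] t` lies in `[η, δ]`, and
`z^[n] (g t) = g (z^[n] t) = z^[n] t` gives `g t = t` by injectivity of `z^[n]`.
-/

open Set Filter Topology Function

/-- An orientation-preserving piecewise-linear homeomorphism of the compact interval
[η, ζ] with finitely many breakpoints (an element of PL₊([η,ζ])). -/
def PLHomeoOn (η ζ : ℝ) (f : ℝ → ℝ) : Prop :=
  f η = η ∧ f ζ = ζ ∧ StrictMonoOn f (Set.Icc η ζ) ∧
  ∃ (n : ℕ) (x : Fin (n + 1) → ℝ), StrictMono x ∧ x 0 = η ∧ x (Fin.last n) = ζ ∧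
    ∀ i : Fin n, ∃ a b : ℝ, 0 < a ∧
      ∀ t ∈ Set.Icc (x i.castSucc) (x i.succ), f t = a * t + b

lemma Fin.exists_castSucc_le_lt_succ {α : Type*} [LinearOrder α] {n : ℕ} (x : Fin (n + 1) → α)
    {L : α} (h0 : x 0 ≤ L) (hlast : L < x (Fin.last n)) :
    ∃ i : Fin n, x i.castSucc ≤ L ∧ L < x i.succ := by
  induction n with
  | zero => exact absurd hlast (not_lt.2 h0)
  | succ n ih =>
    by_cases hL : L < x (Fin.last n).castSucc
    · obtain ⟨i, hi⟩ := ih (x ∘ Fin.castSucc) h0 hL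
      exact ⟨i.castSucc, by simpa only [comp_apply, Fin.succ_castSucc] using hi⟩
    · exact ⟨Fin.last n, not_lt.1 hL, by rwa [Fin.succ_last]⟩

namespace PLHomeoOn

variable {η ζ : ℝ} {f : ℝ → ℝ}

lemma mapsTo (hf : PLHomeoOn η ζ f) : MapsTo f (Icc η ζ) (Icc η ζ) := by
  obtain ⟨hη, hζ, hmono, -⟩ := hf
  intro t ht
  have hηζ : η ≤ ζ := ht.1.trans ht.2
  constructor
  · simpa only [hη] using hmono.monotoneOn (left_mem_Icc.2 hηζ) ht ht.1
  · simpa only [hζ] using hmono.monotoneOn ht (right_mem_Icc.2 hηζ) ht.2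

lemma exists_affine_Icc (hf : PLHomeoOn η ζ f) {L : ℝ} (hL : L ∈ Ico η ζ) :
    ∃ δ > L, ∃ a b : ℝ, ∀ t ∈ Icc L δ, f t = a * t + b := by
  obtain ⟨-, -, -, n, x, -, hx0, hxl, hpieces⟩ := hf
  obtain ⟨i, hiL, hLi⟩ := Fin.exists_castSucc_le_lt_succ x (hx0 ▸ hL.1) (hxl ▸ hL.2)
  obtain ⟨a, b, -, hab⟩ := hpieces i
  exact ⟨x i.succ, hLi, a, b, fun t ht => hab t ⟨hiL.trans ht.1, ht.2⟩⟩

lemma continuousWithinAt_Ici (hf : PLHomeoOn η ζ f) {L : ℝ} (hL : L ∈ Ico η ζ) :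
    ContinuousWithinAt f (Ici L) L := by
  obtain ⟨δ, hLδ, a, b, hab⟩ := hf.exists_affine_Icc hL
  have hcont : ContinuousWithinAt (fun t => a * t + b) (Ici L) L := by fun_prop
  refine hcont.congr_of_eventuallyEq ?_ (hab L (left_mem_Icc.2 hLδ.le))
  filter_upwards [Icc_mem_nhdsGE hLδ] with t ht using hab t ht

lemma exists_eqOn_id_of_hasDerivWithinAt (hf : PLHomeoOn η ζ f) (hηζ : η < ζ)
    (hslope : HasDerivWithinAt f 1 (Ici η) η) : ∃ δ > η, EqOn f id (Icc η δ) := by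
  obtain ⟨δ, hηδ, a, b, hab⟩ := hf.exists_affine_Icc ⟨le_rfl, hηζ⟩
  have hηmem : η ∈ Icc η δ := left_mem_Icc.2 hηδ.le
  have hderiv : HasDerivWithinAt (fun t => a * t + b) 1 (Ici η) η := by
    refine hslope.congr_of_eventuallyEq ?_ (hab η hηmem).symm
    filter_upwards [Icc_mem_nhdsGE hηδ] with t ht using (hab t ht).symm
  have ha : a = 1 := (uniqueDiffWithinAt_Ici η).eq_deriv _
    (((hasDerivAt_id η).const_mul a).add_const b |>.hasDerivWithinAt.congr_deriv (mul_one a))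
    hderiv
  have hb : b = 0 := by
    have hη := hab η hηmem
    rw [hf.1, ha] at hη
    linarith
  exact ⟨δ, hηδ, fun t ht => by rw [hab t ht, ha, hb, one_mul, add_zero, id]⟩

end PLHomeoOn

lemma apply_iterate_of_commOn {α : Type*} {z g : α → α} {s : Set α} (hz : MapsTo z s s)
    (hcomm : ∀ t ∈ s, g (z t) = z (g t)) (n : ℕ) :
    ∀ t ∈ s, g (z^[n] t) = z^[n] (g t) := by
  induction n with
  | zero => intro t _; rfl
  | succ n ih =>
    intro t ht
    rw [iterate_succ_apply', iterate_succ_apply', hcomm _ (hz.iterate n ht), ih t ht]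

/-- The orbit is antitone, and its limit is a fixed point by right continuity, hence `η`. -/
theorem tendsto_iterate_of_lt_self {z : ℝ → ℝ} {η ζ t : ℝ}
    (hmaps : MapsTo z (Icc η ζ) (Icc η ζ)) (hle : ∀ s ∈ Icc η ζ, z s ≤ s)
    (hlt : ∀ s ∈ Ioo η ζ, z s < s) (hcont : ∀ s ∈ Ico η ζ, ContinuousWithinAt z (Ici s) s)
    (ht : t ∈ Ico η ζ) : Tendsto (fun n => z^[n] t) atTop (𝓝 η) := by
  set u : ℕ → ℝ := fun n => z^[n] t
  have hmem : ∀ n, u n ∈ Icc η ζ := fun n => hmaps.iterate n ⟨ht.1, ht.2.le⟩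
  have hanti : Antitone u := antitone_nat_of_succ_le fun n => by
    simpa only [u, iterate_succ_apply'] using hle _ (hmem n)
  have htend : Tendsto u atTop (𝓝 (⨅ n, u n)) :=
    tendsto_atTop_ciInf hanti ⟨η, by rintro _ ⟨n, rfl⟩; exact (hmem n).1⟩
  set L := ⨅ n, u n
  have hLle : ∀ n, L ≤ u n := hanti.le_of_tendsto htend
  have hηL : η ≤ L := ge_of_tendsto' htend fun n => (hmem n).1
  have hLζ : L < ζ := (hLle 0).trans_lt ht.2
  have hfix : z L = L := by
    have hwithin : Tendsto u atTop (𝓝[≥] L) :=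
      tendsto_nhdsWithin_iff.2 ⟨htend, Eventually.of_forall hLle⟩
    refine tendsto_nhds_unique ((hcont L ⟨hηL, hLζ⟩).tendsto.comp hwithin) ?_
    simpa only [u, comp_def, iterate_succ_apply'] using (tendsto_add_atTop_iff_nat 1).2 htend
  rcases hηL.eq_or_lt with hηL | hηL
  · rwa [hηL]
  · exact absurd hfix (hlt L ⟨hηL, hLζ⟩).ne

/-- If z ∈ PL₊([η,ζ]) lies strictly below the diagonal on the interior, and
g ∈ PL₊([η,ζ]) commutes with z and has right derivative 1 at η, then g is the
identity on [η,ζ]. -/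
theorem stmt12 (η ζ : ℝ) (hηζ : η < ζ) (z g : ℝ → ℝ)
    (hz : PLHomeoOn η ζ z) (hg : PLHomeoOn η ζ g)
    (hbelow : ∀ t ∈ Set.Ioo η ζ, z t < t)
    (hcomm : ∀ t ∈ Set.Icc η ζ, g (z t) = z (g t))
    (hslope : HasDerivWithinAt g 1 (Set.Ici η) η) :
    ∀ t ∈ Set.Icc η ζ, g t = t := by
  obtain ⟨δ, hηδ, hid⟩ := hg.exists_eqOn_id_of_hasDerivWithinAt hηζ hslope
  have hzle : ∀ s ∈ Icc η ζ, z s ≤ s := by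
    rintro s ⟨hηs, hsζ⟩
    rcases hηs.eq_or_lt with rfl | hηs
    · exact hz.1.le
    rcases hsζ.eq_or_lt with rfl | hsζ
    · exact hz.2.1.le
    exact (hbelow s ⟨hηs, hsζ⟩).le
  intro t ht
  rcases ht.2.eq_or_lt with rfl | htζ
  · exact hg.2.1
  have htend := tendsto_iterate_of_lt_self hz.mapsTo hzle hbelow
    (fun s hs => hz.continuousWithinAt_Ici hs) ⟨ht.1, htζ⟩
  obtain ⟨n, hn⟩ := (htend.eventually (gt_mem_nhds hηδ)).exists
  have hzn : z^[n] t ∈ Icc η ζ := hz.mapsTo.iterate n ht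
  refine (hz.2.2.1.injOn.iterate hz.mapsTo n) (hg.mapsTo ht) ht ?_
  rw [← apply_iterate_of_commOn hz.mapsTo hcomm n t ht]
  exact hid ⟨hzn.1, hn.le⟩
end
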